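/- arXiv:1705.00167 — 2 statements merged into one kernel-verified Lean document; each statement's English description precedes it below -/
import Mathlib

section
/- Let σ: 𝒜 → ℬ⁺ be a non-erasing morphism between finite alphabets, let x ∈ 𝒜^ℤ, and let X be the closure of the shift orbit of x in 𝒜^ℤ. If σ is recognizable in X (each y ∈ ℬ^ℤ has at most one centered σ-representation (k,x') with x' ∈ X), then σ is recognizable in the sense of Mossé for x: there exists ℓ ≥ 0 such that for each m ∈ C_σ(0,x) and each m' ∈ ℤ, σ(x)_{[m−ℓ,m+ℓ)} = σ(x)_{[m'−ℓ,m'+ℓ)} implies m' ∈ C_σ(0,x). -/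
/-!
If Mossé recognizability failed, then for every `ℓ` some cutting point `m` and some non-cutting
point `m'` of `σ(x)` would carry the same window of radius `ℓ`. Recentring `x` at the letters
whose images contain `m` and `m'` and passing to a limit along an ultrafilter (the full shift is
compact) yields two points `x_a, x_b` of the orbit closure and a single `y` with the two centered
representations `(0, x_a)` and `(k, x_b)`, `k ≥ 1`, contradicting recognizability.
-/

open scoped BigOperators

namespace Recog

variable {A B C : Type*}

/-- A morphism assigning a word to each letter is non-erasing if every image is nonempty. -/
def NonErasing (σ : A → List B) : Prop := ∀ a, σ a ≠ []

/-- Apply a morphism letterwise to a finite word, concatenating the images. -/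
def wordApply (σ : A → List B) : List A → List B
  | [] => []
  | a :: w => σ a ++ wordApply σ w

/-- Composition of morphisms `τ ∘ σ`. -/
def comp (τ : B → List C) (σ : A → List B) : A → List C := fun a => wordApply τ (σ a)

/-- The `ℓ`-th cutting point of the representation `(0, x)`:
`|σ(x_[0,ℓ))|` for `ℓ ≥ 0` and `-|σ(x_[ℓ,0))|` for `ℓ < 0`. -/
def cut (σ : A → List B) (x : ℤ → A) (ℓ : ℤ) : ℤ :=
  if 0 ≤ ℓ then ∑ i ∈ Finset.range ℓ.toNat, ((σ (x i)).length : ℤ)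
  else -∑ i ∈ Finset.range (-ℓ).toNat, ((σ (x (-(i : ℤ) - 1))).length : ℤ)

/-- `y` is the bi-infinite image `σ(x)`, where `σ(x₀)` starts at position `0`. -/
def IsSubstPt (σ : A → List B) (x : ℤ → A) (y : ℤ → B) : Prop :=
  ∀ (ℓ : ℤ) (j : ℕ) (hj : j < (σ (x ℓ)).length),
    y (cut σ x ℓ + j) = (σ (x ℓ)).get ⟨j, hj⟩

/-- `(k, x)` is a `σ`-representation of `y`, i.e. `y = T^k σ(x)`. -/
def IsRep (σ : A → List B) (y : ℤ → B) (k : ℤ) (x : ℤ → A) : Prop :=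
  IsSubstPt σ x fun n => y (n - k)

/-- `(k, x)` is a centered `σ`-representation of `y`: `y = T^k σ(x)` with `0 ≤ k < |σ(x₀)|`. -/
def IsCenteredRep (σ : A → List B) (y : ℤ → B) (k : ℤ) (x : ℤ → A) : Prop :=
  IsRep σ y k x ∧ 0 ≤ k ∧ k < ((σ (x 0)).length : ℤ)

/-- `y` is aperiodic: `T^p y ≠ y` for all `p ≥ 1`. -/
def Aperiodic (y : ℤ → B) : Prop := ∀ p : ℕ, 1 ≤ p → (fun n => y (n + p)) ≠ y

/-- `y` is periodic: `T^p y = y` for some `p ≥ 1`. -/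
def Periodic (y : ℤ → B) : Prop := ∃ p : ℕ, 1 ≤ p ∧ (fun n => y (n + p)) = y

/-- The set of `σ`-cutting points of the representation `(k, x)`. -/
def cutSet (σ : A → List B) (x : ℤ → A) (k : ℤ) : Set ℤ :=
  {m : ℤ | ∃ ℓ : ℤ, m = cut σ x ℓ - k}

/-- `σ` is recognizable in `X`: every `y` has at most one centered `σ`-representation in `X`. -/
def RecIn (σ : A → List B) (X : Set (ℤ → A)) : Prop :=
  ∀ (y : ℤ → B) (k k' : ℤ) (x x' : ℤ → A), x ∈ X → x' ∈ X →
    IsCenteredRep σ y k x → IsCenteredRep σ y k' x' → k = k' ∧ x = x'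

/-- `σ` is recognizable in `X` for aperiodic points. -/
def RecInAp (σ : A → List B) (X : Set (ℤ → A)) : Prop :=
  ∀ y : ℤ → B, Aperiodic y → ∀ (k k' : ℤ) (x x' : ℤ → A), x ∈ X → x' ∈ X →
    IsCenteredRep σ y k x → IsCenteredRep σ y k' x' → k = k' ∧ x = x'

/-- `σ` is left permutative: the first letters of `σ a` and `σ b` differ for distinct `a, b`. -/
def LeftPermutative (σ : A → List B) : Prop :=
  ∀ a b : A, a ≠ b → (σ a).head? ≠ (σ b).head?

/-- `σ` is right permutative: the last letters of `σ a` and `σ b` differ for distinct `a, b`. -/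
def RightPermutative (σ : A → List B) : Prop :=
  ∀ a b : A, a ≠ b → (σ a).getLast? ≠ (σ b).getLast?

/-- `σ` and `σ'` are rotationally conjugate. -/
def RotConj (σ σ' : A → List B) : Prop :=
  ∃ w : List B, (∀ a, σ a ++ w = w ++ σ' a) ∨ (∀ a, w ++ σ a = σ' a ++ w)

/-- The incidence matrix of `σ`, over `ℚ`: entry `(b, a)` counts occurrences of `b` in `σ a`. -/
noncomputable def incidence (σ : A → List B) [DecidableEq B] : Matrix B A ℚ :=
  Matrix.of fun b a => ((σ a).count b : ℚ)

/-- The finite subword `x_[i, i+m)` of a bi-infinite sequence. -/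
def factor (x : ℤ → A) (i : ℤ) (m : ℕ) : List A := (List.range m).map fun j => x (i + j)

/-- The language of a bi-infinite sequence: the set of its finite subwords. -/
def lang (x : ℤ → A) : Set (List A) := {w | ∃ (i : ℤ) (m : ℕ), w = factor x i m}

/-- `σ` is injective on bi-infinite sequences. -/
def InjZ (σ : A → List B) : Prop :=
  ∀ (x x' : ℤ → A) (y : ℤ → B), IsSubstPt σ x y → IsSubstPt σ x' y → x = x'

/-- Cutting points for one-sided sequences. -/
def cutN (σ : A → List B) (x : ℕ → A) (ℓ : ℕ) : ℕ :=
  ∑ i ∈ Finset.range ℓ, (σ (x i)).length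

/-- `y` is the one-sided image `σ(x)` for `x : ℕ → A`. -/
def IsSubstPtN (σ : A → List B) (x : ℕ → A) (y : ℕ → B) : Prop :=
  ∀ (ℓ j : ℕ) (hj : j < (σ (x ℓ)).length),
    y (cutN σ x ℓ + j) = (σ (x ℓ)).get ⟨j, hj⟩

/-- `σ` is injective on one-sided (right-infinite) sequences. -/
def InjN (σ : A → List B) : Prop :=
  ∀ (x x' : ℕ → A) (y : ℕ → B), IsSubstPtN σ x y → IsSubstPtN σ x' y → x = x'

/-- The total length `⦀σ⦀ = Σ_a |σ a|`. -/
def totalLen (σ : A → List B) [Fintype A] : ℕ := ∑ a, (σ a).length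

/-- `X` is invariant under the two-sided shift. -/
def ShiftInvariant (X : Set (ℤ → A)) : Prop :=
  ∀ x ∈ X, (fun n => x (n + 1)) ∈ X ∧ (fun n => x (n - 1)) ∈ X

/-- The iterate `σ^n` of a substitution, applied to a letter. -/
def iter (σ : A → List A) : ℕ → A → List A
  | 0, a => [a]
  | n + 1, a => wordApply (iter σ n) (σ a)

/-- The language `ℒ_σ` of a substitution: subwords of the `σ^n(a)`. -/
def subLang (σ : A → List A) : Set (List A) := {w | ∃ (n : ℕ) (a : A), w <:+: iter σ n a}

/-- The substitutive shift `X_σ`. -/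
def subX (σ : A → List A) : Set (ℤ → A) := {x | ∀ w ∈ lang x, w ∈ subLang σ}

/-- `σ` is recognizable in the sense of Mossé for `x`. -/
def MosseRec (σ : A → List B) (x : ℤ → A) : Prop :=
  ∃ ℓ : ℕ, ∀ y : ℤ → B, IsSubstPt σ x y →
    ∀ m ∈ cutSet σ x 0, ∀ m' : ℤ,
      factor y (m - ℓ) (2 * ℓ) = factor y (m' - ℓ) (2 * ℓ) → m' ∈ cutSet σ x 0

section Sadic

variable {𝒜 : ℕ → Type*}

/-- `block σ N = σ_[0,N)`, mapping a letter of `𝒜 N` to a word over `𝒜 0`. -/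
def block (σ : ∀ n, 𝒜 (n + 1) → List (𝒜 n)) : ∀ N, 𝒜 N → List (𝒜 0)
  | 0, a => [a]
  | N + 1, a => wordApply (block σ N) (σ N a)

/-- `blockFrom σ n k = σ_[n,n+k)`, mapping a letter of `𝒜 (n+k)` to a word over `𝒜 n`. -/
def blockFrom (σ : ∀ n, 𝒜 (n + 1) → List (𝒜 n)) (n k : ℕ) : 𝒜 (n + k) → List (𝒜 n) :=
  block (𝒜 := fun m => 𝒜 (n + m)) (fun m => σ (n + m)) k

/-- The language `ℒ^(n)_σ` of a directive sequence. -/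
def sadicLang (σ : ∀ n, 𝒜 (n + 1) → List (𝒜 n)) (n : ℕ) : Set (List (𝒜 n)) :=
  {w | ∃ (k : ℕ) (a : 𝒜 (n + k)), 1 ≤ k ∧ w <:+: blockFrom σ n k a}

/-- The shift `X^(n)_σ` of a directive sequence. -/
def sadicX (σ : ∀ n, 𝒜 (n + 1) → List (𝒜 n)) (n : ℕ) : Set (ℤ → 𝒜 n) :=
  {x | ∀ w ∈ lang x, w ∈ sadicLang σ n}

/-- A directive sequence is everywhere growing if `min_a |σ_[0,n)(a)| → ∞`. -/
def EverywhereGrowing (σ : ∀ n, 𝒜 (n + 1) → List (𝒜 n)) : Prop :=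
  ∀ m : ℕ, ∃ N : ℕ, ∀ n ≥ N, ∀ a : 𝒜 n, m ≤ (block σ n a).length

end Sadic

end Recog

open Filter

lemma Ultrafilter.exists_forall_eventually_apply_eq {ι κ α : Type*} [Finite α]
    (U : Ultrafilter ι) (u : ι → κ → α) : ∃ z : κ → α, ∀ i, ∀ᶠ n in U, u n i = z i := by
  choose z hz using fun i =>
    (U.eventually_exists_iff (P := fun a n => u n i = a)).mp (.of_forall fun n => ⟨u n i, rfl⟩)
  exact ⟨z, hz⟩

lemma mem_closure_of_forall_eventually_apply_eq {ι κ α : Type*} [TopologicalSpace α]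
    [DiscreteTopology α] {l : Filter ι} [l.NeBot] {u : ι → κ → α} {S : Set (κ → α)}
    (hu : ∀ n, u n ∈ S) {z : κ → α} (hz : ∀ i, ∀ᶠ n in l, u n i = z i) : z ∈ closure S :=
  mem_closure_of_tendsto (tendsto_pi_nhds.mpr fun i => by simpa [nhds_discrete] using hz i)
    (.of_forall hu)

namespace Recog

variable {A B : Type*} (σ : A → List B)

lemma cut_natCast (x : ℤ → A) (n : ℕ) :
    cut σ x n = ∑ i ∈ Finset.range n, ((σ (x i)).length : ℤ) := by
  simp [cut]

lemma cut_neg_natCast (x : ℤ → A) (n : ℕ) :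
    cut σ x (-n) = -∑ i ∈ Finset.range n, ((σ (x (-(i : ℤ) - 1))).length : ℤ) := by
  rcases n.eq_zero_or_pos with rfl | hn
  · simp [cut]
  · rw [cut, if_neg (by omega), neg_neg, Int.toNat_natCast]

lemma cut_succ (x : ℤ → A) (ℓ : ℤ) :
    cut σ x (ℓ + 1) = cut σ x ℓ + (σ (x ℓ)).length := by
  obtain ⟨n, rfl | rfl⟩ := Int.eq_nat_or_neg ℓ
  · rw [← Nat.cast_succ, cut_natCast, cut_natCast, Finset.sum_range_succ]
  · cases n with
    | zero => simp [cut]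
    | succ n =>
      rw [show -((n + 1 : ℕ) : ℤ) + 1 = -n by push_cast; ring, cut_neg_natCast, cut_neg_natCast,
        Finset.sum_range_succ]
      push_cast
      ring_nf

lemma cut_sub_one (x : ℤ → A) (ℓ : ℤ) :
    cut σ x (ℓ - 1) = cut σ x ℓ - (σ (x (ℓ - 1))).length := by
  rw [eq_sub_iff_add_eq, ← cut_succ, sub_add_cancel]

lemma cut_shift (x : ℤ → A) (j ℓ : ℤ) :
    cut σ (fun i => x (i + j)) ℓ = cut σ x (ℓ + j) - cut σ x j := by
  induction ℓ using Int.induction_on with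
  | zero => simp [cut]
  | succ n ih => rw [cut_succ, ih, add_right_comm, cut_succ]; ring
  | pred n ih => rw [cut_sub_one, ih, sub_add_eq_add_sub, cut_sub_one]; ring

variable {σ}

lemma monotone_cut_sub_self (hσ : NonErasing σ) (x : ℤ → A) :
    Monotone fun ℓ => cut σ x ℓ - ℓ :=
  monotone_int_of_le_succ fun ℓ => by
    have := List.length_pos_iff.mpr (hσ (x ℓ))
    simp only [cut_succ]
    omega

lemma exists_cut_le_lt (hσ : NonErasing σ) (x : ℤ → A) (m : ℤ) :
    ∃ ℓ, cut σ x ℓ ≤ m ∧ m < cut σ x (ℓ + 1) := by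
  have hmono := monotone_cut_sub_self hσ x
  have hcut0 : cut σ x 0 = 0 := by simp [cut]
  obtain ⟨ℓ, hℓ, hmax⟩ := Int.exists_greatest_of_bdd (P := fun ℓ => cut σ x ℓ ≤ m)
    ⟨|m|, fun ℓ hℓ => by
      by_contra! h
      have := hmono (show 0 ≤ ℓ by linarith [abs_nonneg m])
      simp only [hcut0] at this
      linarith [le_abs_self m]⟩
    ⟨-|m|, by
      have := hmono (show -|m| ≤ 0 by simp)
      simp only [hcut0] at this
      linarith [neg_abs_le m]⟩
  exact ⟨ℓ, hℓ, not_le.mp fun h => by have := hmax _ h; omega⟩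

lemma exists_cut_add_of_notMem_cutSet (hσ : NonErasing σ) {x : ℤ → A} {m : ℤ}
    (hm : m ∉ cutSet σ x 0) : ∃ ℓ k, m = cut σ x ℓ + k ∧ 0 < k ∧ k < (σ (x ℓ)).length := by
  obtain ⟨ℓ, hle, hlt⟩ := exists_cut_le_lt hσ x m
  rw [cut_succ] at hlt
  exact ⟨ℓ, m - cut σ x ℓ, by ring, lt_of_le_of_ne (by omega) fun h => hm ⟨ℓ, by omega⟩, by omega⟩

lemma IsSubstPt.shift {x : ℤ → A} {y : ℤ → B} (h : IsSubstPt σ x y) (j : ℤ) :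
    IsSubstPt σ (fun i => x (i + j)) (fun s => y (s + cut σ x j)) := by
  intro ℓ t ht
  convert h (ℓ + j) t ht using 2
  rw [cut_shift]
  ring

lemma eventually_cut_eq {ι : Type*} {l : Filter ι} {X : ι → ℤ → A} {x : ℤ → A}
    (hX : ∀ i, ∀ᶠ n in l, X n i = x i) (ℓ : ℤ) : ∀ᶠ n in l, cut σ (X n) ℓ = cut σ x ℓ := by
  induction ℓ using Int.induction_on with
  | zero => simp [cut]
  | succ k ih =>
    filter_upwards [ih, hX k] with n hcut hx
    rw [cut_succ, cut_succ, hcut, hx]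
  | pred k ih =>
    filter_upwards [ih, hX (-k - 1)] with n hcut hx
    rw [cut_sub_one, cut_sub_one, hcut, hx]

lemma IsSubstPt.of_eventually {ι : Type*} {l : Filter ι} [l.NeBot] {X : ι → ℤ → A}
    {Y : ι → ℤ → B} {x : ℤ → A} {y : ℤ → B} (h : ∀ n, IsSubstPt σ (X n) (Y n))
    (hX : ∀ i, ∀ᶠ n in l, X n i = x i) (hY : ∀ s, ∀ᶠ n in l, Y n s = y s) :
    IsSubstPt σ x y := by
  intro ℓ t ht
  obtain ⟨n, hx, hcut, hy⟩ :=
    ((hX ℓ).and ((eventually_cut_eq hX ℓ).and (hY (cut σ x ℓ + t)))).exists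
  have ht' : t < (σ (X n ℓ)).length := hx ▸ ht
  rw [← hy, ← hcut, h n ℓ t ht', List.get_of_eq (congrArg σ hx)]

lemma isCenteredRep_of_eventually {ι : Type*} {l : Filter ι} [l.NeBot] {x : ℤ → A}
    {y : ι → ℤ → B} (hy : ∀ n, IsSubstPt σ x (y n)) {j : ι → ℤ} {k : ℤ} (hk : 0 ≤ k)
    (hlt : ∀ᶠ n in l, k < (σ (x (j n))).length) {x' : ℤ → A} {y' : ℤ → B}
    (hx' : ∀ i, ∀ᶠ n in l, x (i + j n) = x' i)
    (hy' : ∀ s, ∀ᶠ n in l, y n (s + (cut σ x (j n) + k)) = y' s) :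
    IsCenteredRep σ y' k x' := by
  refine ⟨IsSubstPt.of_eventually (fun n => (hy n).shift (j n)) hx' fun s => ?_, hk, ?_⟩
  · filter_upwards [hy' (s - k)] with n h
    rw [← h, sub_add_add_cancel]
  · obtain ⟨n, hn, hx⟩ := (hlt.and (hx' 0)).exists
    rwa [← hx, zero_add]

lemma apply_add_eq_of_factor_eq {y : ℤ → B} {m m' : ℤ} {ℓ : ℕ}
    (h : factor y (m - ℓ) (2 * ℓ) = factor y (m' - ℓ) (2 * ℓ)) {s : ℤ} (hs : |s| < ℓ) :
    y (s + m) = y (s + m') := by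
  obtain ⟨hs₁, hs₂⟩ := abs_lt.mp hs
  unfold factor at h
  have := List.map_inj_left.mp h (s + ℓ) <| by
    simpa using ⟨(s + ℓ).toNat, by omega, by omega⟩
  rwa [sub_add_add_cancel, sub_add_add_cancel, add_comm m, add_comm m'] at this

end Recog

open Recog in
/-- If `σ` is recognizable in the orbit closure `X` of `x`, then `σ` is
recognizable in the sense of Mossé for `x`. -/
theorem stmt5 {A B : Type*} [Fintype A] [Fintype B]
    [TopologicalSpace A] [DiscreteTopology A]
    (σ : A → List B) (hσ : NonErasing σ) (x : ℤ → A)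
    (hrec : RecIn σ (closure {z : ℤ → A | ∃ n : ℤ, z = fun i => x (i + n)})) :
    MosseRec σ x := by
  by_contra hM
  simp only [MosseRec, not_exists, not_forall] at hM
  choose y hy m hm m' hfac hm'cut using hM
  choose j hj using hm
  choose j' k hm' hk₀ hklt using fun n => exists_cut_add_of_notMem_cutSet hσ (hm'cut n)
  obtain ⟨U, hU⟩ := exists_ultrafilter_le (atTop : Filter ℕ)
  obtain ⟨xa, hxa⟩ := U.exists_forall_eventually_apply_eq fun n i => x (i + j n)
  obtain ⟨xb, hxb⟩ := U.exists_forall_eventually_apply_eq fun n i => x (i + j' n)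
  obtain ⟨ya, hya⟩ := U.exists_forall_eventually_apply_eq fun n s => y n (s + m n)
  obtain ⟨c, ⟨hc₀, hclt⟩, hc⟩ : ∃ c ∈ Set.Ioo 0 ((σ (xb 0)).length : ℤ), ∀ᶠ n in U, k n = c := by
    refine (U.eventually_exists_mem_iff (P := fun c n => k n = c) (Set.finite_Ioo _ _)).mp ?_
    filter_upwards [hxb 0] with n hn
    exact ⟨k n, ⟨hk₀ n, by simpa [← hn] using hklt n⟩, rfl⟩
  have rep₁ : IsCenteredRep σ ya 0 xa :=
    isCenteredRep_of_eventually hy le_rfl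
      (.of_forall fun n => by simpa using List.length_pos_iff.mpr (hσ _)) hxa
      fun s => by simpa [hj] using hya s
  have rep₂ : IsCenteredRep σ ya c xb := by
    refine isCenteredRep_of_eventually hy hc₀.le ?_ hxb fun s => ?_
    · filter_upwards [hxb 0] with n hn
      simpa [← hn] using hclt
    · filter_upwards [hya s, hc, hU (eventually_gt_atTop |s|.toNat)] with n hyn hcn hn
      rw [← hcn, ← hm', ← hyn, apply_add_eq_of_factor_eq (hfac n) (by omega)]
  have hX : ∀ (j : ℕ → ℤ) (xl : ℤ → A), (∀ i, ∀ᶠ n in U, x (i + j n) = xl i) →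
      xl ∈ closure {z : ℤ → A | ∃ n : ℤ, z = fun i => x (i + n)} :=
    fun j _ => mem_closure_of_forall_eventually_apply_eq fun n => by exact ⟨j n, rfl⟩
  exact hc₀.ne (hrec ya 0 c xa xb (hX j xa hxa) (hX j' xb hxb) rep₁ rep₂).1
end

section
/- Let σ: 𝒜 → ℬ⁺ be a non-erasing morphism between finite alphabets that is not injective on 𝒜^ℤ. Then σ = σ̃ ∘ τ for some finite alphabet 𝒜̃ and non-erasing morphisms τ: 𝒜 → 𝒜̃⁺ and σ̃: 𝒜̃ → ℬ⁺ with |𝒜̃| < |𝒜| and ⦀σ̃⦀ < ⦀σ⦀. Moreover, if σ is not injective on 𝒜^ℕ, then σ̃ can be chosen so that each word σ̃(a), a ∈ 𝒜̃, is a prefix of some word σ(b), b ∈ 𝒜. -/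
open scoped BigOperators

/-!
Induction on `⦀σ⦀` for `σ` not injective on `𝒜^ℕ`. Two parsings of the same sequence can be shifted
so that they differ at their first letter; comparing cutting points then gives a word equation
`σ(b) = σ(x₀ ⋯ x_{k-1}) p` with `k ≥ 1`, `b ∉ {x₀, …, x_{k-1}}` and `p` a prefix of `σ(x_k)`.
If `p` is empty, `b` is redundant and is removed from the alphabet. Otherwise `σ = σ₁ ∘ ρ`, where
`σ₁` sends `b` to `p` and `ρ` sends `b` to `x₀ ⋯ x_{k-1} b`; now `⦀σ₁⦀ < ⦀σ⦀`, `σ₁` is again not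
injective on `𝒜^ℕ`, and every image of `σ₁` is a prefix of an image of `σ`.

If `σ` is injective on `𝒜^ℕ` but not on `𝒜^ℤ`, two preimages of a point differ at a negative
index, so the mirror morphism `a ↦ reverse (σ a)` is not injective on `𝒜^ℕ`; mirroring its
factorization factors `σ`.
-/

open Filter

namespace Recog

variable {A A' B C : Type*}

theorem wordApply_eq_flatMap (σ : A → List B) (l : List A) : wordApply σ l = l.flatMap σ := by
  induction l with
  | nil => rfl
  | cons a l ih => simp [wordApply, ih]

theorem comp_apply (τ : B → List C) (σ : A → List B) (a : A) : comp τ σ a = (σ a).flatMap τ :=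
  wordApply_eq_flatMap τ (σ a)

theorem NonErasing.flatMap_ne_nil {σ : A → List B} (hσ : NonErasing σ) {l : List A}
    (hl : l ≠ []) : l.flatMap σ ≠ [] := by
  obtain ⟨a, ha⟩ := List.exists_mem_of_ne_nil l hl
  simpa [List.flatMap_eq_nil_iff] using ⟨a, ha, hσ a⟩

theorem NonErasing.comp {τ : B → List C} {σ : A → List B} (hτ : NonErasing τ)
    (hσ : NonErasing σ) : NonErasing (comp τ σ) := fun a => by
  rw [comp_apply]
  exact hτ.flatMap_ne_nil (hσ a)

theorem NonErasing.reverse {σ : A → List B} (hσ : NonErasing σ) :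
    NonErasing fun a => (σ a).reverse := by
  simpa [NonErasing] using hσ

theorem NonErasing.update [DecidableEq A] {σ : A → List B} (hσ : NonErasing σ) {b : A}
    {p : List B} (hp : p ≠ []) : NonErasing (Function.update σ b p) := fun c => by
  by_cases hc : c = b
  · subst hc; simpa using hp
  · simpa [hc] using hσ c

theorem map_range_prefix (f : ℕ → A) {n m : ℕ} (h : n ≤ m) :
    (List.range n).map f <+: (List.range m).map f := by
  rw [List.prefix_iff_eq_take, List.length_map, List.length_range, ← List.map_take,
    List.take_range, min_eq_left h]

section OneSided

variable {σ : A → List B} {x : ℕ → A} {y : ℕ → B}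

theorem cutN_succ (σ : A → List B) (x : ℕ → A) (n : ℕ) :
    cutN σ x (n + 1) = cutN σ x n + (σ (x n)).length :=
  Finset.sum_range_succ _ n

theorem cutN_eq_length (σ : A → List B) (x : ℕ → A) (n : ℕ) :
    cutN σ x n = (((List.range n).map x).flatMap σ).length := by
  induction n with
  | zero => rfl
  | succ n ih => simp [cutN_succ, ih, List.range_succ]

theorem monotone_cutN (σ : A → List B) (x : ℕ → A) : Monotone (cutN σ x) :=
  monotone_nat_of_le_succ fun n => by rw [cutN_succ]; omega

theorem le_cutN (hσ : NonErasing σ) (x : ℕ → A) (n : ℕ) : n ≤ cutN σ x n := by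
  induction n with
  | zero => exact le_rfl
  | succ n ih =>
    have := List.length_pos_iff.mpr (hσ (x n))
    rw [cutN_succ]
    omega

theorem exists_cutN_le_lt (hσ : NonErasing σ) (x : ℕ → A) (L : ℕ) :
    ∃ k, cutN σ x k ≤ L ∧ L < cutN σ x (k + 1) := by
  classical
  set k := Nat.findGreatest (fun n => cutN σ x n ≤ L) L
  refine ⟨k, Nat.findGreatest_spec (P := fun n => cutN σ x n ≤ L) (Nat.zero_le L) (by simp [cutN]),
    not_le.mp fun h => ?_⟩
  exact Nat.findGreatest_is_greatest (Nat.lt_succ_self k) ((le_cutN hσ x _).trans h) h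

theorem IsSubstPtN.flatMap_eq (h : IsSubstPtN σ x y) (n : ℕ) :
    ((List.range n).map x).flatMap σ = (List.range (cutN σ x n)).map y := by
  induction n with
  | zero => rfl
  | succ n ih =>
    have hseg : σ (x n) = (List.range (σ (x n)).length).map fun j => y (cutN σ x n + j) :=
      List.ext_get (by simp) fun j hj _ => by simpa using (h n j hj).symm
    rw [List.range_succ, List.map_append, List.flatMap_append, ih, cutN_succ, List.range_add,
      List.map_append, List.map_map, Function.comp_def, ← hseg]
    simp

theorem isSubstPtN_iff :
    IsSubstPtN σ x y ↔ ∀ n, ((List.range n).map x).flatMap σ = (List.range (cutN σ x n)).map y := by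
  refine ⟨IsSubstPtN.flatMap_eq, fun h ℓ j hj => ?_⟩
  have hℓ := h (ℓ + 1)
  rw [List.range_succ, List.map_append, List.flatMap_append, h ℓ] at hℓ
  have hidx : cutN σ x ℓ + j < ((List.range (cutN σ x (ℓ + 1))).map y).length := by
    simp [cutN_succ, hj]
  have := List.getElem_of_eq hℓ.symm hidx
  simp only [List.getElem_map, List.getElem_range] at this
  rw [this, List.getElem_append_right (by simp)]
  simp

theorem isSubstPtN_of_frequently
    (h : ∃ᶠ n in atTop, ((List.range n).map x).flatMap σ = (List.range (cutN σ x n)).map y) :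
    IsSubstPtN σ x y := by
  refine isSubstPtN_iff.mpr fun n => ?_
  obtain ⟨N, hnN, hN⟩ := frequently_atTop.mp h n
  have hx : ((List.range n).map x).flatMap σ <+: (List.range (cutN σ x N)).map y :=
    hN ▸ (map_range_prefix x hnN).flatMap σ
  have hy := map_range_prefix y (monotone_cutN σ x hnN)
  exact (List.prefix_of_prefix_length_le hx hy (by simp [cutN_eq_length])).eq_of_length
    (by simp [cutN_eq_length])

theorem exists_isSubstPtN {ρ : A → List A'} (hρ : NonErasing ρ) (x : ℕ → A) :
    ∃ z, IsSubstPtN ρ x z := by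
  set P : ℕ → List A' := fun n => ((List.range n).map x).flatMap ρ
  have hP : ∀ {n m}, n ≤ m → P n <+: P m := fun h => (map_range_prefix x h).flatMap ρ
  have hlen : ∀ n, (P n).length = cutN ρ x n := fun n => (cutN_eq_length ρ x n).symm
  set d := (ρ (x 0)).head (hρ (x 0))
  refine ⟨fun i => (P (i + 1)).getD i d, isSubstPtN_iff.mpr fun n => ?_⟩
  refine List.ext_getElem (by rw [List.length_map, List.length_range]; exact hlen n)
    fun i hi _ => ?_
  have hi' : i < (P (i + 1)).length := by
    rw [hlen]
    exact Nat.lt_of_lt_of_le i.lt_succ_self (le_cutN hρ x _)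
  simp only [List.getElem_map, List.getElem_range, List.getD_eq_getElem _ _ hi']
  rw [(hP (le_max_left n (i + 1))).getElem hi, (hP (le_max_right n (i + 1))).getElem hi']

theorem IsSubstPtN.of_comp {ρ : A → List A'} {σ₁ : A' → List B} {z : ℕ → A'}
    (hρ : NonErasing ρ) (hcomp : comp σ₁ ρ = σ) (hz : IsSubstPtN ρ x z) (hy : IsSubstPtN σ x y) :
    IsSubstPtN σ₁ z y := by
  have key : ∀ N,
      ((List.range (cutN ρ x N)).map z).flatMap σ₁ = ((List.range N).map x).flatMap σ := by
    intro N
    rw [← hz.flatMap_eq, List.flatMap_assoc, ← hcomp]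
    exact List.flatMap_congr fun a _ => (comp_apply σ₁ ρ a).symm
  refine isSubstPtN_of_frequently (frequently_atTop.mpr fun N => ⟨cutN ρ x N, le_cutN hρ x N, ?_⟩)
  rw [key, hy.flatMap_eq, cutN_eq_length σ₁, key, hy.flatMap_eq, List.length_map, List.length_range]

theorem cutN_shift (σ : A → List B) (x : ℕ → A) (ℓ m : ℕ) :
    cutN σ x ℓ + cutN σ (fun n => x (ℓ + n)) m = cutN σ x (ℓ + m) := by
  induction m with
  | zero => rfl
  | succ m ih => rw [cutN_succ, ← add_assoc, ih, ← add_assoc, cutN_succ]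

theorem IsSubstPtN.shift (h : IsSubstPtN σ x y) (ℓ : ℕ) :
    IsSubstPtN σ (fun n => x (ℓ + n)) (fun n => y (cutN σ x ℓ + n)) := fun m j hj => by
  simp only
  rw [← add_assoc, cutN_shift σ x ℓ m]
  exact h (ℓ + m) j hj

theorem exists_isSubstPtN_ne_of_not_injN (h : ¬ InjN σ) :
    ∃ (x x' : ℕ → A) (y : ℕ → B), IsSubstPtN σ x y ∧ IsSubstPtN σ x' y ∧ x 0 ≠ x' 0 ∧
      (σ (x 0)).length ≤ (σ (x' 0)).length := by
  classical
  simp only [InjN, not_forall] at h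
  obtain ⟨x, x', y, hx, hx', hne⟩ := h
  have hex : ∃ n, x n ≠ x' n := Function.ne_iff.mp hne
  set ℓ := Nat.find hex
  have hcut : cutN σ x ℓ = cutN σ x' ℓ := Finset.sum_congr rfl fun i hi => by
    rw [not_not.mp (Nat.find_min hex (Finset.mem_range.mp hi))]
  have hd : x (ℓ + 0) ≠ x' (ℓ + 0) := Nat.find_spec hex
  have H := hx.shift ℓ
  have H' := hx'.shift ℓ
  rw [← hcut] at H'
  rcases le_total (σ (x ℓ)).length (σ (x' ℓ)).length with hle | hle
  · exact ⟨_, _, _, H, H', hd, hle⟩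
  · exact ⟨_, _, _, H', H, hd.symm, hle⟩

theorem exists_eq_flatMap_append_of_not_injN (hσ : NonErasing σ) (h : ¬ InjN σ) :
    ∃ (x x' : ℕ → A) (y : ℕ → B) (k : ℕ) (p : List B),
      IsSubstPtN σ x y ∧ IsSubstPtN σ x' y ∧ 0 < k ∧ (∀ i < k, x i ≠ x' 0) ∧
      σ (x' 0) = ((List.range k).map x).flatMap σ ++ p ∧ p <+: σ (x k) := by
  obtain ⟨x, x', y, hx, hx', hne, hlen⟩ := exists_isSubstPtN_ne_of_not_injN h
  have hcut₁ : ∀ z : ℕ → A, cutN σ z 1 = (σ (z 0)).length := fun z => by simp [cutN]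
  obtain ⟨k, hk, hk'⟩ := exists_cutN_le_lt hσ x (σ (x' 0)).length
  have hk0 : 0 < k := Nat.pos_of_ne_zero fun h0 => by
    rw [h0, hcut₁] at hk'
    omega
  have hyL : (List.range (σ (x' 0)).length).map y = σ (x' 0) := by
    simpa [hcut₁] using (hx'.flatMap_eq 1).symm
  obtain ⟨p, hp⟩ : ((List.range k).map x).flatMap σ <+: σ (x' 0) := by
    rw [hx.flatMap_eq, ← hyL]
    exact map_range_prefix y hk
  refine ⟨x, x', y, k, p, hx, hx', hk0, fun i hi hxi => ?_, hp.symm, ?_⟩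
  · have hmono := monotone_cutN σ x (Nat.succ_le_of_lt hi)
    rw [cutN_succ, hxi] at hmono
    have hi0 : i = 0 := by have := le_cutN hσ x i; omega
    exact hne (hi0 ▸ hxi)
  · have hpre : σ (x' 0) <+: ((List.range (k + 1)).map x).flatMap σ := by
      rw [hx.flatMap_eq, ← hyL]
      exact map_range_prefix y hk'.le
    rw [← hp, List.range_succ, List.map_append, List.flatMap_append] at hpre
    simpa using hpre

end OneSided

theorem totalLen_update_lt [Fintype A] [DecidableEq A] (σ : A → List B) {b : A} {p : List B}
    (hp : p.length < (σ b).length) : totalLen (Function.update σ b p) < totalLen σ := by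
  unfold totalLen
  rw [Fintype.sum_eq_add_sum_subtype_ne _ b, Fintype.sum_eq_add_sum_subtype_ne _ b]
  simp only [Function.update_self]
  have : ∀ c : {c // c ≠ b}, (Function.update σ b p c).length = (σ c).length := fun c => by
    rw [Function.update_of_ne c.2]
  simp only [this]
  omega

structure IsSmallerFactorization [Fintype A] [Fintype A'] (σ : A → List B) (τ : A → List A')
    (σ' : A' → List B) : Prop where
  nonErasing_left : NonErasing τ
  nonErasing_right : NonErasing σ'
  card_lt : Fintype.card A' < Fintype.card A
  totalLen_lt : totalLen σ' < totalLen σ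
  comp_eq : ∀ a, comp σ' τ a = σ a

namespace IsSmallerFactorization

variable [Fintype A] [Fintype A'] {σ : A → List B} {τ : A → List A'} {σ' : A' → List B}

theorem exists_fin (h : IsSmallerFactorization σ τ σ') :
    ∃ (m : ℕ) (τ₀ : A → List (Fin m)) (σ₀ : Fin m → List B),
      IsSmallerFactorization σ τ₀ σ₀ ∧ ∀ c, ∃ d, σ₀ c = σ' d := by
  set e := Fintype.equivFin A'
  refine ⟨_, fun a => (τ a).map e, fun c => σ' (e.symm c), ⟨fun a => ?_, fun c => h.2 _, ?_, ?_,
    fun a => ?_⟩, fun c => ⟨_, rfl⟩⟩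
  · simpa using h.1 a
  · simpa using h.3
  · simpa [totalLen, Equiv.sum_comp e.symm fun c => (σ' c).length] using h.4
  · simp [comp_apply, List.flatMap_map, ← h.5 a]

theorem comp_right {σ₁ : A → List B} {ρ : A → List A} (h : IsSmallerFactorization σ₁ τ σ')
    (hρ : NonErasing ρ) (hcomp : comp σ₁ ρ = σ) (hlt : totalLen σ₁ < totalLen σ) :
    IsSmallerFactorization σ (comp τ ρ) σ' where
  nonErasing_left := h.1.comp hρ
  nonErasing_right := h.2
  card_lt := h.3
  totalLen_lt := h.4.trans hlt
  comp_eq a := by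
    rw [← hcomp, comp_apply, comp_apply, comp_apply, List.flatMap_assoc]
    exact List.flatMap_congr fun c _ => by rw [← h.5 c, comp_apply]

theorem reverse (h : IsSmallerFactorization σ τ σ') :
    IsSmallerFactorization (fun a => (σ a).reverse) (fun a => (τ a).reverse)
      (fun c => (σ' c).reverse) where
  nonErasing_left := h.1.reverse
  nonErasing_right := h.2.reverse
  card_lt := h.3
  totalLen_lt := by simpa [totalLen] using h.4
  comp_eq a := by
    rw [comp_apply, ← h.5 a, comp_apply, List.reverse_flatMap]
    rfl

end IsSmallerFactorization

theorem exists_isSmallerFactorization_of_eq_flatMap [Fintype A] [DecidableEq A] {σ : A → List B}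
    (hσ : NonErasing σ) {b : A} {w : List A} (hw : w ≠ []) (hb : b ∉ w)
    (h : σ b = w.flatMap σ) :
    ∃ τ : A → List {c // c ≠ b}, IsSmallerFactorization σ τ fun c => σ c := by
  have ha₀ : w.head hw ≠ b := fun h' => hb (h' ▸ List.head_mem hw)
  set toSub : A → {c // c ≠ b} := fun c => if hc : c = b then ⟨_, ha₀⟩ else ⟨c, hc⟩
  have htoSub : ∀ c, c ≠ b → (toSub c : A) = c := fun c hc => by simp [toSub, hc]
  refine ⟨fun c => if c = b then w.map toSub else [toSub c],
    ⟨fun c => ?_, fun c => hσ c, Fintype.card_subtype_lt (x := b) (by simp), ?_, fun c => ?_⟩⟩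
  · split_ifs <;> simp [hw]
  · have := List.length_pos_iff.mpr (hσ b)
    unfold totalLen
    rw [Fintype.sum_eq_add_sum_subtype_ne _ b]
    exact Nat.lt_add_of_pos_left this
  · rw [comp_apply]
    split_ifs with hc
    · rw [hc, h, List.flatMap_map]
      exact List.flatMap_congr fun a ha => by rw [htoSub a (ne_of_mem_of_not_mem ha hb)]
    · simp [htoSub c hc]

section Unfolding

variable [DecidableEq A]

def prependAt (b : A) (w : List A) : A → List A := Function.update (fun c => [c]) b (w ++ [b])

variable {b : A} {w : List A}

theorem nonErasing_prependAt : NonErasing (prependAt b w) := fun c => by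
  by_cases hc : c = b <;> simp [prependAt, hc]

theorem flatMap_prependAt_of_not_mem {l : List A} (hb : b ∉ l) : l.flatMap (prependAt b w) = l := by
  rw [List.flatMap_congr fun c hc => Function.update_of_ne (ne_of_mem_of_not_mem hc hb) _ _,
    List.flatMap_singleton']

theorem prependAt_getElem_zero_ne (hw : w ≠ []) (hb : b ∉ w) (c : A)
    (hc : 0 < (prependAt b w c).length) : (prependAt b w c)[0] ≠ b := by
  by_cases hcb : c = b
  · subst hcb
    obtain ⟨a, w, rfl⟩ := List.exists_cons_of_ne_nil hw
    simpa [prependAt] using (List.ne_of_not_mem_cons hb).symm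
  · simp [prependAt, hcb]

theorem comp_update_prependAt {σ : A → List B} {p : List B} (hb : b ∉ w)
    (h : σ b = w.flatMap σ ++ p) : comp (Function.update σ b p) (prependAt b w) = σ := by
  funext c
  rw [comp_apply]
  by_cases hc : c = b
  · subst hc
    rw [h, prependAt, Function.update_self, List.flatMap_append,
      List.flatMap_congr fun a ha => Function.update_of_ne (ne_of_mem_of_not_mem ha hb) _ _]
    simp
  · simp [prependAt, hc]

/-- Unfolding every `b` to `x₀ ⋯ x_{k-1} b` in the two parsings gives two parsings of `y` by the
updated morphism; at position `k` one reads `b`, the other a letter that starts no unfolded word. -/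
theorem not_injN_update_of_eq_flatMap_append {σ : A → List B} {x x' : ℕ → A} {y : ℕ → B}
    {k : ℕ} {p : List B} (hx : IsSubstPtN σ x y) (hx' : IsSubstPtN σ x' y) (hk : 0 < k)
    (hxk : ∀ i < k, x i ≠ x' 0) (h : σ (x' 0) = ((List.range k).map x).flatMap σ ++ p) :
    ¬ InjN (Function.update σ (x' 0) p) := by
  set b := x' 0
  set w := (List.range k).map x
  have hb : b ∉ w := by simpa [w] using hxk
  have hw : w ≠ [] := by simpa [w] using hk.ne'
  have hcomp := comp_update_prependAt hb h
  obtain ⟨z, hz⟩ := exists_isSubstPtN (nonErasing_prependAt (b := b) (w := w)) x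
  obtain ⟨z', hz'⟩ := exists_isSubstPtN (nonErasing_prependAt (b := b) (w := w)) x'
  intro hinj
  have hzz' : z = z' := hinj z z' y (hz.of_comp nonErasing_prependAt hcomp hx)
    (hz'.of_comp nonErasing_prependAt hcomp hx')
  have hpos := List.length_pos_iff.mpr (nonErasing_prependAt (b := b) (w := w) (x k))
  have hzk : z k = (prependAt b w (x k))[0] := by
    have := hz k 0 hpos
    rwa [cutN_eq_length, flatMap_prependAt_of_not_mem hb, List.length_map,
      List.length_range, Nat.add_zero] at this
  have hz'k : z' k = b := by
    have := hz' 0 k (by simp [prependAt, b, w])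
    simpa [cutN, prependAt, b, w] using this
  exact prependAt_getElem_zero_ne hw hb (x k) hpos (hzk ▸ hzz' ▸ hz'k)

end Unfolding

theorem exists_prefix_factorization_of_not_injN [Fintype A] {σ : A → List B}
    (hσ : NonErasing σ) (h : ¬ InjN σ) :
    ∃ (m : ℕ) (τ : A → List (Fin m)) (σ' : Fin m → List B),
      IsSmallerFactorization σ τ σ' ∧ ∀ c, ∃ b, σ' c <+: σ b := by
  classical
  induction hN : totalLen σ using Nat.strong_induction_on generalizing σ with
  | _ N ih =>
  obtain ⟨x, x', y, k, p, hx, hx', hk, hxk, hword, hpre⟩ :=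
    exists_eq_flatMap_append_of_not_injN hσ h
  have hb : x' 0 ∉ (List.range k).map x := by simpa using hxk
  have hw : (List.range k).map x ≠ [] := by simpa using hk.ne'
  rcases eq_or_ne p [] with rfl | hp
  · obtain ⟨τ, hτ⟩ := exists_isSmallerFactorization_of_eq_flatMap hσ hw hb (by simpa using hword)
    obtain ⟨m, τ₀, σ₀, h₀, hσ₀⟩ := hτ.exists_fin
    refine ⟨m, τ₀, σ₀, h₀, fun c => ?_⟩
    obtain ⟨d, hd⟩ := hσ₀ c
    exact ⟨d, hd ▸ List.prefix_refl _⟩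
  · have hlt : totalLen (Function.update σ (x' 0) p) < totalLen σ := by
      refine totalLen_update_lt σ ?_
      have := List.length_pos_iff.mpr (hσ.flatMap_ne_nil hw)
      rw [hword, List.length_append]
      omega
    obtain ⟨m, τ, σ', h', hpre'⟩ := ih _ (hN ▸ hlt) (hσ.update hp)
      (not_injN_update_of_eq_flatMap_append hx hx' hk hxk hword) rfl
    refine ⟨m, comp τ (prependAt (x' 0) ((List.range k).map x)), σ',
      h'.comp_right nonErasing_prependAt (comp_update_prependAt hb hword) hlt, fun c => ?_⟩
    obtain ⟨d, hd⟩ := hpre' c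
    by_cases hdb : d = x' 0
    · exact ⟨x k, hd.trans (by simpa [hdb] using hpre)⟩
    · exact ⟨d, by simpa [hdb] using hd⟩

section TwoSided

variable {σ : A → List B} {x : ℤ → A} {y : ℤ → B}

theorem cut_natCast_s14 (σ : A → List B) (x : ℤ → A) (ℓ : ℕ) :
    cut σ x ℓ = cutN σ (fun n : ℕ => x n) ℓ := by
  simp [cut, cutN]

theorem cut_neg_natCast_sub_one (σ : A → List B) (x : ℤ → A) (ℓ : ℕ) :
    cut σ x (-ℓ - 1) = -(cutN (fun a => (σ a).reverse) (fun n : ℕ => x (-n - 1)) (ℓ + 1) : ℤ) := by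
  rw [cut, if_neg (by omega), show (-(-(ℓ : ℤ) - 1)).toNat = ℓ + 1 by omega]
  simp [cutN]

theorem IsSubstPt.isSubstPtN_nonneg (h : IsSubstPt σ x y) :
    IsSubstPtN σ (fun n : ℕ => x n) (fun n : ℕ => y n) := fun ℓ j hj => by
  have := h ℓ j hj
  rw [cut_natCast_s14] at this
  exact_mod_cast this

theorem IsSubstPt.isSubstPtN_neg_reverse (h : IsSubstPt σ x y) :
    IsSubstPtN (fun a => (σ a).reverse) (fun n : ℕ => x (-n - 1)) (fun n : ℕ => y (-n - 1)) := by
  intro ℓ j hj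
  set L := (σ (x (-ℓ - 1))).length
  have hjL : j < L := by simpa using hj
  have := h (-ℓ - 1) (L - 1 - j) (by omega)
  rw [cut_neg_natCast_sub_one, cutN_succ] at this
  simp only [List.length_reverse, List.get_eq_getElem, List.getElem_reverse] at this ⊢
  convert this using 2
  push_cast
  omega

theorem not_injN_reverse_of_injN (hN : InjN σ) (hZ : ¬ InjZ σ) :
    ¬ InjN fun a => (σ a).reverse := by
  intro hR
  simp only [InjZ, not_forall] at hZ
  obtain ⟨x, x', y, hx, hx', hne⟩ := hZ
  have hpos := congrFun (hN _ _ _ hx.isSubstPtN_nonneg hx'.isSubstPtN_nonneg)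
  have hneg := congrFun (hR _ _ _ hx.isSubstPtN_neg_reverse hx'.isSubstPtN_neg_reverse)
  refine hne (funext fun i => ?_)
  rcases Int.eq_nat_or_neg i with ⟨n, rfl | rfl⟩
  · exact hpos n
  · rcases n with _ | n
    · exact hpos 0
    · have := hneg n
      rwa [show -((n + 1 : ℕ) : ℤ) = -(n : ℤ) - 1 by push_cast; ring]

end TwoSided

end Recog

open Recog in
theorem stmt14_general {A B : Type*} [Fintype A]
    (σ : A → List B) (hσ : NonErasing σ) (hnotinj : ¬ InjZ σ) :
    ∃ (m : ℕ) (τ : A → List (Fin m)) (σ' : Fin m → List B),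
      NonErasing τ ∧ NonErasing σ' ∧ m < Fintype.card A ∧
      totalLen σ' < totalLen σ ∧ (∀ a : A, comp σ' τ a = σ a) ∧
      (¬ InjN σ → ∀ c : Fin m, ∃ b : A, σ' c <+: σ b) := by
  by_cases hN : InjN σ
  · obtain ⟨m, τ, σ', h, -⟩ :=
      exists_prefix_factorization_of_not_injN hσ.reverse (not_injN_reverse_of_injN hN hnotinj)
    have h' := h.reverse
    simp only [List.reverse_reverse] at h'
    exact ⟨m, _, _, h'.1, h'.2, by simpa using h'.3, h'.4, h'.5, absurd hN⟩
  · obtain ⟨m, τ, σ', h, hpre⟩ := exists_prefix_factorization_of_not_injN hσ hN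
    exact ⟨m, τ, σ', h.1, h.2, by simpa using h.3, h.4, h.5, fun _ => hpre⟩

open Recog in
/-- A morphism that is not injective on `𝒜^ℤ` factors as `σ = σ' ∘ τ` through a
strictly smaller alphabet, with `⦀σ'⦀ < ⦀σ⦀`; moreover, if `σ` is not injective on `𝒜^ℕ`,
then `σ'` can be chosen so that each `σ'(c)` is a prefix of some `σ(b)`. -/
theorem stmt14 {A B : Type*} [Fintype A] [Fintype B]
    (σ : A → List B) (hσ : NonErasing σ) (hnotinj : ¬ InjZ σ) :
    ∃ (m : ℕ) (τ : A → List (Fin m)) (σ' : Fin m → List B),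
      NonErasing τ ∧ NonErasing σ' ∧ m < Fintype.card A ∧
      totalLen σ' < totalLen σ ∧ (∀ a : A, comp σ' τ a = σ a) ∧
      (¬ InjN σ → ∀ c : Fin m, ∃ b : A, σ' c <+: σ b) :=
  stmt14_general σ hσ hnotinj
end
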